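/- arXiv:2308.02863 — 2 statements merged into one kernel-verified Lean document; each statement's English description precedes it below -/
import Mathlib

section
/- Let p, q be non-negative integers with p ≤ q − 1, let 0 < c < 1/2, and let a, α₁, …, α_p, β₁, …, β_q be positive real parameters. Define the polynomials 𝐏_n(x) = ₚ₊₂F_q(−n, n+a, α₁, …, α_p; β₁, …, β_q; x) for n ∈ ℤ₊. Then for all complex t, x with |t| < c and |x| < 1/(4c) − 1/2, one has (1−t)^{−a} · ₚ₊₂F_q(a/2, (a+1)/2, α₁, …, α_p; β₁, …, β_q; −4xt/(1−t)²) = Σ_{n=0}^∞ ((a)_n / n!) 𝐏_n(x) tⁿ, where the series on the right converges. -/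
/-- Pochhammer symbol `(c)_k = c (c+1) ⋯ (c+k-1)`. -/
noncomputable def poch (c : ℂ) (k : ℕ) : ℂ := ∏ j ∈ Finset.range k, (c + j)

/-- The polynomials `𝐏_n(x) = ₚ₊₂F_q(-n, n+a, α₁,…,α_p; β₁,…,β_q; x)`
(the series terminates since `(-n)_k = 0` for `k > n`). -/
noncomputable def bP (p q : ℕ) (a : ℝ) (α : Fin p → ℝ) (β : Fin q → ℝ)
    (n : ℕ) (x : ℂ) : ℂ :=
  ∑' k : ℕ, poch (-(n : ℂ)) k * poch ((n : ℂ) + a) k * (∏ i, poch (α i) k) /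
      (∏ j, poch (β j) k) * x ^ k / (Nat.factorial k)

/-!
Put `n = m + k` in the double series `∑ₙ ∑ₖ (a)ₙ/n! · (-n)ₖ (n+a)ₖ/k! · Rₖ xᵏ tⁿ`, where
`Rₖ = (α)ₖ/(β)ₖ`. Since `(a)ₙ (n+a)ₖ = (a)_{2k} (a+2k)ₘ` and `(-n)ₖ/n! = (-1)ᵏ/m!`, the term splits
as `(a)_{2k} Rₖ (-xt)ᵏ/k! · (a+2k)ₘ tᵐ/m!`. Summing over `m` with the binomial series gives
`(1-t)^{-a-2k}`, and `(a)_{2k} = 4ᵏ (a/2)ₖ ((a+1)/2)ₖ` turns the remaining sum over `k` into the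
right-hand side. The same computation with absolute values bounds the double series by
`(1-|t|)^{-a}` times a `ₚ₊₂F_q` series at `4|x||t|/(1-|t|)²`; this argument is `< 1` by the
hypothesis on `c`, and the series converges by the ratio test because `p + 2 ≤ q + 1`.
-/

open Filter Topology Finset
open scoped Nat

lemma poch_zero (c : ℂ) : poch c 0 = 1 := by simp [poch]

lemma poch_succ (c : ℂ) (k : ℕ) : poch c (k + 1) = poch c k * (c + k) :=
  prod_range_succ _ _

lemma poch_add (c : ℂ) (m n : ℕ) : poch c (m + n) = poch c m * poch (c + m) n := by
  simp only [poch, prod_range_add, Nat.cast_add, add_assoc]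

lemma poch_ne_zero_of_re_pos {c : ℂ} (hc : 0 < c.re) (k : ℕ) : poch c k ≠ 0 :=
  prod_ne_zero_iff.mpr fun j _ h ↦ by
    have hre := congrArg Complex.re h
    simp only [Complex.add_re, Complex.natCast_re, Complex.zero_re] at hre
    linarith [j.cast_nonneg (α := ℝ)]

lemma poch_neg_natCast_eq_zero {n k : ℕ} (h : n < k) : poch (-(n : ℂ)) k = 0 :=
  prod_eq_zero (mem_range.mpr h) (by simp)

lemma factorial_mul_poch_neg_natCast (m k : ℕ) :
    (m ! : ℂ) * poch (-((m + k : ℕ) : ℂ)) k = (-1) ^ k * (m + k)! := by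
  induction k with
  | zero => simp [poch_zero]
  | succ k ih =>
    have hshift : poch (-((m + (k + 1) : ℕ) : ℂ)) (k + 1) =
        -((m + k + 1 : ℕ) : ℂ) * poch (-((m + k : ℕ) : ℂ)) k := by
      rw [add_comm k 1, poch_add]
      simp only [poch, range_one, prod_singleton]
      push_cast
      ring_nf
    rw [hshift, ← Nat.add_assoc, Nat.factorial_succ]
    push_cast at ih ⊢
    linear_combination (-(m : ℂ) - k - 1) * ih

lemma poch_mul_poch_neg_mul_poch (a : ℂ) (m k : ℕ) :
    poch a (m + k) / (m + k)! * (poch (-((m + k : ℕ) : ℂ)) k * poch ((m + k : ℕ) + a) k) =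
      (-1) ^ k * poch a (2 * k) * (poch (a + 2 * k) m / m !) := by
  have hm : (m ! : ℂ) ≠ 0 := by exact_mod_cast m.factorial_ne_zero
  have hmk : ((m + k)! : ℂ) ≠ 0 := by exact_mod_cast (m + k).factorial_ne_zero
  have hpoch : poch a (m + k) * poch ((m + k : ℕ) + a) k = poch a (2 * k) * poch (a + 2 * k) m := by
    rw [add_comm ((m + k : ℕ) : ℂ), ← poch_add, show m + k + k = 2 * k + m by ring, poch_add]
    push_cast
    rfl
  field_simp
  linear_combination (poch a (m + k) * poch ((m + k : ℕ) + a) k) *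
    factorial_mul_poch_neg_natCast m k + (-1) ^ k * (m + k)! * hpoch

lemma poch_two_mul (a : ℂ) (k : ℕ) :
    poch a (2 * k) = 4 ^ k * poch (a / 2) k * poch ((a + 1) / 2) k := by
  induction k with
  | zero => simp [poch_zero]
  | succ k ih =>
    rw [show 2 * (k + 1) = 2 * k + 1 + 1 by ring, poch_succ, poch_succ, poch_succ, poch_succ, ih]
    push_cast
    ring

lemma poch_ofReal (c : ℝ) (k : ℕ) : poch c k = ((∏ j ∈ range k, (c + j) : ℝ) : ℂ) := by
  push_cast [poch]; rfl

lemma poch_eq_ascPochhammer_eval (c : ℂ) (k : ℕ) : poch c k = (ascPochhammer ℂ k).eval c := by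
  induction k with
  | zero => simp [poch_zero]
  | succ k ih => simp [poch_succ, ascPochhammer_succ_right, ih]

lemma ring_choose_add_sub_one (b : ℂ) (m : ℕ) : Ring.choose (b + m - 1) m = poch b m / m ! := by
  rw [Ring.choose_eq_smul, Polynomial.descPochhammer_smeval_eq_ascPochhammer,
    Polynomial.ascPochhammer_smeval_eq_eval, poch_eq_ascPochhammer_eval, smul_eq_mul,
    inv_mul_eq_div]
  congr 2
  ring

lemma hasSum_poch_div_factorial_mul_pow (b : ℂ) {z : ℂ} (hz : ‖z‖ < 1) :
    HasSum (fun m ↦ poch b m / m ! * z ^ m) ((1 - z) ^ (-b)) := by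
  have h := (Complex.one_div_one_sub_cpow_hasFPowerSeriesOnBall_zero b).hasSum
    (y := z) (by rwa [Metric.mem_eball, edist_zero_right, ← ofReal_norm, ENNReal.ofReal_lt_one])
  simpa [FormalMultilinearSeries.ofScalars_apply_eq, ring_choose_add_sub_one, Complex.cpow_neg,
    mul_comm] using h

lemma hasSum_norm_poch_div_factorial_mul_pow {b : ℝ} (hb : 0 < b) {z : ℂ} (hz : ‖z‖ < 1) :
    HasSum (fun m ↦ ‖poch b m / m ! * z ^ m‖) ((1 - ‖z‖) ^ (-b)) := by
  have hterm (m : ℕ) : ((‖poch b m / m ! * z ^ m‖ : ℝ) : ℂ) = poch b m / m ! * (‖z‖ : ℂ) ^ m := by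
    rw [poch_ofReal, norm_mul, norm_div, norm_pow, Complex.norm_real, Complex.norm_natCast,
      Real.norm_of_nonneg (prod_nonneg fun j _ ↦ by positivity)]
    push_cast
    rfl
  rw [← Complex.hasSum_ofReal, Complex.ofReal_cpow (by linarith [norm_nonneg z])]
  push_cast
  simp_rw [hterm]
  exact hasSum_poch_div_factorial_mul_pow b (by simpa using hz)

noncomputable def hypergeometricTerm {P Q : ℕ} (A : Fin P → ℂ) (B : Fin Q → ℂ) (z : ℂ) (k : ℕ) :
    ℂ :=
  (∏ i, poch (A i) k) / (∏ j, poch (B j) k) * z ^ k / k !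

lemma hypergeometricTerm_cons_cons {P Q : ℕ} (b c : ℂ) (A : Fin P → ℂ) (B : Fin Q → ℂ) (z : ℂ)
    (k : ℕ) : hypergeometricTerm (Fin.cons b (Fin.cons c A)) B z k =
      poch b k * poch c k * ((∏ i, poch (A i) k) / ∏ j, poch (B j) k) * z ^ k / k ! := by
  simp only [hypergeometricTerm, Fin.prod_univ_succ, Fin.cons_zero, Fin.cons_succ]
  ring

section HypergeometricSeries

variable {P Q : ℕ} (A : Fin P → ℂ) {B : Fin Q → ℂ} (z : ℂ)

lemma hypergeometricTerm_succ (hB : ∀ j, 0 < (B j).re) (k : ℕ) :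
    hypergeometricTerm A B z (k + 1) = hypergeometricTerm A B z k *
      ((∏ i, (A i + k)) / ((∏ j, (B j + k)) * (k + 1)) * z) := by
  have hpoch : ∏ j, poch (B j) k ≠ 0 :=
    prod_ne_zero_iff.mpr fun j _ ↦ poch_ne_zero_of_re_pos (hB j) k
  have hshift : ∏ j, (B j + k) ≠ 0 := prod_ne_zero_iff.mpr fun j _ ↦
    poch_ne_zero_of_re_pos (hB j) (k + 1) ∘ fun h ↦ by rw [poch_succ, h, mul_zero]
  simp only [hypergeometricTerm, poch_succ, prod_mul_distrib, Nat.factorial_succ, pow_succ]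
  push_cast
  field_simp

lemma norm_hypergeometricTerm_succ_le (hPQ : P ≤ Q + 1) (hB : ∀ j, 0 < (B j).re) {k : ℕ}
    (hk : 1 ≤ k) : ‖hypergeometricTerm A B z (k + 1)‖ ≤
      (∏ i, (‖A i‖ + k) / k) * ‖z‖ * ‖hypergeometricTerm A B z k‖ := by
  have hk0 : (0 : ℝ) < k := by exact_mod_cast hk
  have hnum : ‖∏ i, (A i + k)‖ ≤ ∏ i, (‖A i‖ + k) := by
    rw [norm_prod]
    exact prod_le_prod (fun _ _ ↦ norm_nonneg _) fun i _ ↦ (norm_add_le _ _).trans (by simp)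
  have hden : (k : ℝ) ^ P ≤ ‖(∏ j, (B j + k)) * (k + 1)‖ := by
    calc (k : ℝ) ^ P ≤ k ^ (Q + 1) := pow_le_pow_right₀ (by exact_mod_cast hk) hPQ
      _ = (∏ _j : Fin Q, (k : ℝ)) * k := by simp [pow_succ]
      _ ≤ (∏ j, ‖B j + k‖) * ‖(k : ℂ) + 1‖ := by
        refine mul_le_mul (prod_le_prod (fun _ _ ↦ hk0.le) fun j _ ↦ ?_) ?_ hk0.le
          (prod_nonneg fun _ _ ↦ norm_nonneg _)
        · exact (by simpa using (hB j).le : (k : ℝ) ≤ (B j + k).re).trans (Complex.re_le_norm _)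
        · rw [← Nat.cast_add_one, Complex.norm_natCast]
          simp
      _ = ‖(∏ j, (B j + k)) * (k + 1)‖ := by rw [norm_mul, norm_prod]
  rw [hypergeometricTerm_succ A z hB, norm_mul, norm_mul, norm_div, prod_div_distrib,
    prod_const, card_univ, Fintype.card_fin, mul_comm ‖hypergeometricTerm A B z k‖]
  gcongr

lemma tendsto_prod_add_div_self (u : Fin P → ℝ) :
    Tendsto (fun k : ℕ ↦ ∏ i, (u i + k) / k) atTop (𝓝 1) := by
  rw [← prod_const_one (s := (univ : Finset (Fin P)))]
  refine tendsto_finsetProd _ fun i _ ↦ ?_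
  have h : Tendsto (fun k : ℕ ↦ u i * (1 / (k : ℝ)) + 1) atTop (𝓝 (u i * 0 + 1)) :=
    (tendsto_one_div_atTop_nhds_zero_nat.const_mul _).add_const _
  rw [mul_zero, zero_add] at h
  refine h.congr' ?_
  filter_upwards [eventually_ne_atTop 0] with k hk
  field_simp

theorem summable_norm_hypergeometricTerm (hPQ : P ≤ Q + 1) (hB : ∀ j, 0 < (B j).re)
    (hz : ‖z‖ < 1) : Summable (fun k ↦ ‖hypergeometricTerm A B z k‖) := by
  refine Summable.norm (f := hypergeometricTerm A B z)
    (summable_of_ratio_norm_eventually_le (r := (1 + ‖z‖) / 2) (by linarith) ?_)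
  have hlim := (tendsto_prod_add_div_self fun i ↦ ‖A i‖).mul_const ‖z‖
  rw [one_mul] at hlim
  filter_upwards [hlim.eventually_le_const (by linarith : ‖z‖ < (1 + ‖z‖) / 2),
    eventually_ge_atTop 1] with k hratio hk
  exact (norm_hypergeometricTerm_succ_le A z hPQ hB hk).trans
    (mul_le_mul_of_nonneg_right hratio (norm_nonneg _))

end HypergeometricSeries

section GeneratingFunction

variable {a : ℝ} {R : ℕ → ℂ} {x t : ℂ}

noncomputable def expansionTerm (a : ℝ) (R : ℕ → ℂ) (x t : ℂ) (nk : ℕ × ℕ) : ℂ :=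
  poch a nk.1 / nk.1 ! *
    (poch (-(nk.1 : ℂ)) nk.2 * poch (nk.1 + a) nk.2 * R nk.2 * x ^ nk.2 / nk.2 !) * t ^ nk.1

lemma expansionTerm_eq_zero_of_lt {n k : ℕ} (h : n < k) : expansionTerm a R x t (n, k) = 0 := by
  simp [expansionTerm, poch_neg_natCast_eq_zero h]

lemma expansionTerm_add_left (m k : ℕ) : expansionTerm a R x t (m + k, k) =
    poch a (2 * k) * R k * (-(x * t)) ^ k / k ! * (poch (a + 2 * k) m / m ! * t ^ m) := by
  have h := poch_mul_poch_neg_mul_poch a m k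
  simp only [expansionTerm]
  linear_combination (R k * x ^ k / k ! * t ^ (m + k)) * h

lemma hasSum_expansionTerm_add_left (ht : ‖t‖ < 1) (k : ℕ) :
    HasSum (fun m ↦ expansionTerm a R x t (m + k, k)) ((1 - t) ^ (-(a : ℂ)) *
      (poch (a / 2) k * poch ((a + 1) / 2) k * R k * (-(4 * x * t / (1 - t) ^ 2)) ^ k / k !)) := by
  have h1t : 1 - t ≠ 0 := sub_ne_zero.mpr fun h ↦ by simp [← h] at ht
  have hpow : (1 - t) ^ (-((a : ℂ) + 2 * k)) = (1 - t) ^ (-(a : ℂ)) * (((1 - t) ^ 2) ^ k)⁻¹ := by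
    rw [neg_add, Complex.cpow_add _ _ h1t, Complex.cpow_neg (1 - t) (2 * k), ← pow_mul]
    norm_cast
  have hval : poch a (2 * k) * R k * (-(x * t)) ^ k / k ! * (1 - t) ^ (-((a : ℂ) + 2 * k)) =
      (1 - t) ^ (-(a : ℂ)) * (poch (a / 2) k * poch ((a + 1) / 2) k * R k *
        (-(4 * x * t / (1 - t) ^ 2)) ^ k / k !) := by
    rw [hpow, poch_two_mul, show -(4 * x * t / (1 - t) ^ 2) = 4 * -(x * t) * ((1 - t) ^ 2)⁻¹ by
      ring, mul_pow, mul_pow, inv_pow]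
    ring
  rw [← hval]
  exact ((hasSum_poch_div_factorial_mul_pow _ ht).mul_left _).congr_fun
    (expansionTerm_add_left · k)

lemma hasSum_norm_expansionTerm_add_left (ha : 0 < a) (ht : ‖t‖ < 1) (k : ℕ) :
    HasSum (fun m ↦ ‖expansionTerm a R x t (m + k, k)‖) ((1 - ‖t‖) ^ (-a) *
      (‖poch (a / 2) k * poch ((a + 1) / 2) k * R k / (k ! : ℂ)‖ *
        (4 * ‖x‖ * ‖t‖ / (1 - ‖t‖) ^ 2) ^ k)) := by
  have h1t : 0 < 1 - ‖t‖ := by linarith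
  have hpow : (1 - ‖t‖) ^ (-(a + 2 * k)) = (1 - ‖t‖) ^ (-a) * (((1 - ‖t‖) ^ 2) ^ k)⁻¹ := by
    rw [neg_add, Real.rpow_add h1t, Real.rpow_neg h1t.le (2 * k), ← pow_mul]
    norm_cast
  have hb : 0 < a + 2 * k := by positivity
  have hval : ‖poch a (2 * k) * R k * (-(x * t)) ^ k / (k ! : ℂ)‖ * (1 - ‖t‖) ^ (-(a + 2 * k)) =
      (1 - ‖t‖) ^ (-a) * (‖poch (a / 2) k * poch ((a + 1) / 2) k * R k / (k ! : ℂ)‖ *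
        (4 * ‖x‖ * ‖t‖ / (1 - ‖t‖) ^ 2) ^ k) := by
    rw [hpow, poch_two_mul, div_pow, mul_pow, mul_pow]
    simp only [norm_mul, norm_div, norm_pow, norm_neg, Complex.norm_ofNat]
    field_simp
    ring
  rw [← hval]
  refine ((hasSum_norm_poch_div_factorial_mul_pow hb ht).mul_left _).congr_fun fun m ↦ ?_
  rw [expansionTerm_add_left, norm_mul]
  push_cast
  rfl

lemma hasSum_expansionTerm_fst (n : ℕ) : HasSum (fun k ↦ expansionTerm a R x t (n, k))
    (poch a n / n ! * (∑' k, poch (-(n : ℂ)) k * poch (n + a) k * R k * x ^ k / k !) * t ^ n) := by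
  have hfin : Summable fun k ↦ poch (-(n : ℂ)) k * poch (n + a) k * R k * x ^ k / k ! :=
    summable_of_ne_finset_zero (s := range (n + 1)) fun k hk ↦ by
      rw [poch_neg_natCast_eq_zero (by simpa using hk), zero_mul, zero_mul, zero_mul, zero_div]
  exact (hfin.hasSum.mul_left (poch a n / n !)).mul_right (t ^ n)

theorem hasSum_expansionTerm_comp_add_left (ha : 0 < a) (ht : ‖t‖ < 1)
    (hR : Summable fun k ↦ ‖poch (a / 2) k * poch ((a + 1) / 2) k * R k / (k ! : ℂ)‖ *
      (4 * ‖x‖ * ‖t‖ / (1 - ‖t‖) ^ 2) ^ k) :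
    HasSum (fun km : ℕ × ℕ ↦ expansionTerm a R x t (km.2 + km.1, km.1))
      ((1 - t) ^ (-(a : ℂ)) * ∑' k, poch (a / 2) k * poch ((a + 1) / 2) k * R k *
        (-(4 * x * t / (1 - t) ^ 2)) ^ k / k !) := by
  have hnorm : Summable fun km : ℕ × ℕ ↦ ‖expansionTerm a R x t (km.2 + km.1, km.1)‖ := by
    refine (summable_prod_of_nonneg fun _ ↦ norm_nonneg _).mpr
      ⟨fun k ↦ (hasSum_norm_expansionTerm_add_left ha ht k).summable, ?_⟩
    simp_rw [(hasSum_norm_expansionTerm_add_left ha ht _).tsum_eq]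
    exact hR.mul_left _
  have hsum := hnorm.of_norm.hasSum
  have hrows := hsum.prod_fiberwise (hasSum_expansionTerm_add_left ht)
  rwa [hrows.tsum_eq.symm.trans tsum_mul_left] at hsum

theorem hasSum_expansion (ha : 0 < a) (ht : ‖t‖ < 1)
    (hR : Summable fun k ↦ ‖poch (a / 2) k * poch ((a + 1) / 2) k * R k / (k ! : ℂ)‖ *
      (4 * ‖x‖ * ‖t‖ / (1 - ‖t‖) ^ 2) ^ k) :
    HasSum (fun n : ℕ ↦ poch a n / n ! *
        (∑' k, poch (-(n : ℂ)) k * poch (n + a) k * R k * x ^ k / k !) * t ^ n)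
      ((1 - t) ^ (-(a : ℂ)) * ∑' k, poch (a / 2) k * poch ((a + 1) / 2) k * R k *
        (-(4 * x * t / (1 - t) ^ 2)) ^ k / k !) := by
  have hinj : Function.Injective fun km : ℕ × ℕ ↦ (km.2 + km.1, km.1) := fun u v h ↦ by
    simp only [Prod.mk.injEq] at h
    exact Prod.ext h.2 (by omega)
  have hvanish (nk : ℕ × ℕ) (hnk : nk ∉ Set.range fun km : ℕ × ℕ ↦ (km.2 + km.1, km.1)) :
      expansionTerm a R x t nk = 0 := by
    refine expansionTerm_eq_zero_of_lt (not_le.mp fun hle ↦ hnk ⟨(nk.2, nk.1 - nk.2), ?_⟩)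
    exact Prod.ext (by dsimp only; omega) rfl
  exact ((hinj.hasSum_iff hvanish).mp (hasSum_expansionTerm_comp_add_left ha ht hR)).prod_fiberwise
    hasSum_expansionTerm_fst

end GeneratingFunction

theorem stmt_1_general (p q : ℕ) (hpq : p + 1 ≤ q) (c : ℝ)
    (a : ℝ) (ha : 0 < a) (α : Fin p → ℝ) (β : Fin q → ℝ)
    (hβ : ∀ j, 0 < β j)
    (t x : ℂ) (ht : ‖t‖ < c) (hx : ‖x‖ < 1/(4*c) - 1/2) :
    HasSum (fun n : ℕ => poch (a : ℂ) n / (Nat.factorial n) * bP p q a α β n x * t ^ n)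
      ((1 - t) ^ (-(a : ℂ)) *
        ∑' k : ℕ, poch ((a : ℂ)/2) k * poch (((a : ℂ)+1)/2) k * (∏ i, poch (α i) k) /
          (∏ j, poch (β j) k) * (-(4*x*t/(1-t)^2)) ^ k / (Nat.factorial k)) := by
  have hc : 0 < c := (norm_nonneg t).trans_lt ht
  have hcx : 4 * c * ‖x‖ < 1 - 2 * c := by
    calc 4 * c * ‖x‖ < 4 * c * (1 / (4 * c) - 1 / 2) := by gcongr
      _ = 1 - 2 * c := by field_simp; ring
  have ht1 : ‖t‖ < 1 := by nlinarith [norm_nonneg x]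
  have hz : 4 * ‖x‖ * ‖t‖ / (1 - ‖t‖) ^ 2 < 1 := by
    rw [div_lt_one (by nlinarith)]
    nlinarith [norm_nonneg x, norm_nonneg t, mul_le_mul_of_nonneg_left ht.le (norm_nonneg x)]
  have hR := summable_norm_hypergeometricTerm
    (Fin.cons (a / 2 : ℂ) (Fin.cons ((a + 1) / 2 : ℂ) fun i ↦ (α i : ℂ)) : Fin (p + 2) → ℂ)
    (B := fun j ↦ (β j : ℂ)) (z := ((4 * ‖x‖ * ‖t‖ / (1 - ‖t‖) ^ 2 : ℝ) : ℂ)) (by omega)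
    (fun j ↦ by simpa using hβ j)
    (by rwa [Complex.norm_real, Real.norm_of_nonneg (by positivity)])
  have key := hasSum_expansion (R := fun k ↦ (∏ i, poch (α i) k) / ∏ j, poch (β j) k) (x := x)
    ha ht1 (hR.congr fun k ↦ by
      rw [hypergeometricTerm_cons_cons, mul_div_right_comm, norm_mul, norm_pow, Complex.norm_real,
        Real.norm_of_nonneg (by positivity)])
  simp only [bP, mul_div_assoc] at key ⊢
  exact key

theorem stmt_1 (p q : ℕ) (hpq : p + 1 ≤ q) (c : ℝ) (hc1 : 0 < c) (hc2 : c < 1/2)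
    (a : ℝ) (ha : 0 < a) (α : Fin p → ℝ) (β : Fin q → ℝ)
    (hα : ∀ i, 0 < α i) (hβ : ∀ j, 0 < β j)
    (t x : ℂ) (ht : ‖t‖ < c) (hx : ‖x‖ < 1/(4*c) - 1/2) :
    HasSum (fun n : ℕ => poch (a : ℂ) n / (Nat.factorial n) * bP p q a α β n x * t ^ n)
      ((1 - t) ^ (-(a : ℂ)) *
        ∑' k : ℕ, poch ((a : ℂ)/2) k * poch (((a : ℂ)+1)/2) k * (∏ i, poch (α i) k) /
          (∏ j, poch (β j) k) * (-(4*x*t/(1-t)^2)) ^ k / (Nat.factorial k)) :=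
  stmt_1_general p q hpq c a ha α β hβ t x ht hx
end

section
/- Let ρ ∈ ℕ, δ₁, …, δ_ρ ∈ (−1, ∞), κ₁, …, κ_ρ ∈ ℤ₊, and α > −1. Then for all t, x ∈ ℂ, one has e^t · ᵨF_{ρ+1}(δ₁+1, …, δ_ρ+1; α+1, κ₁+δ₁+1, …, κ_ρ+δ_ρ+1; −xt) = Σ_{n=0}^∞ ℒ_n(x) tⁿ/n!. -/
/-- The polynomials
`ℒ_n(x;α,δ₁,…,δ_ρ,κ₁,…,κ_ρ)
 = ᵨ₊₁F_{ρ+1}(-n, δ₁+1,…,δ_ρ+1; α+1, κ₁+δ₁+1,…,κ_ρ+δ_ρ+1; x)`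
(the series terminates since `(-n)_k = 0` for `k > n`). -/
noncomputable def calL (ρ : ℕ) (α : ℝ) (δ : Fin ρ → ℝ) (κ : Fin ρ → ℕ)
    (n : ℕ) (x : ℂ) : ℂ :=
  ∑' k : ℕ, poch (-(n : ℂ)) k * (∏ i, poch ((δ i : ℂ) + 1) k) /
      (poch ((α : ℂ) + 1) k * ∏ i, poch ((κ i : ℂ) + (δ i : ℂ) + 1) k) *
      x ^ k / (Nat.factorial k)

/-- Real Pochhammer symbol. -/
noncomputable def pochR (r : ℝ) (k : ℕ) : ℝ := ∏ j ∈ Finset.range k, (r + j)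

lemma poch_ofReal_s4 (r : ℝ) (k : ℕ) : poch (r : ℂ) k = ((pochR r k : ℝ) : ℂ) := by
  rw [poch, pochR]; push_cast; rfl

lemma pochR_pos {r : ℝ} (hr : 0 < r) (k : ℕ) : 0 < pochR r k :=
  Finset.prod_pos fun j _ => by positivity

lemma pochR_mono {r s : ℝ} (hr : 0 < r) (hrs : r ≤ s) (k : ℕ) :
    pochR r k ≤ pochR s k := by
  apply Finset.prod_le_prod
  · intro j _; positivity
  · intro j _; linarith

lemma pow_le_pochR {r : ℝ} (hr : 0 < r) (k : ℕ) : r ^ k ≤ pochR r k := by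
  calc r ^ k = ∏ _j ∈ Finset.range k, r := by rw [Finset.prod_const, Finset.card_range]
    _ ≤ pochR r k := by
        apply Finset.prod_le_prod (fun j _ => le_of_lt hr)
        intro j _; exact le_add_of_nonneg_right (by positivity)

lemma poch_neg_nat {n k : ℕ} (hk : k ≤ n) :
    poch (-(n : ℂ)) k = (-1) ^ k * (n.descFactorial k : ℂ) := by
  rw [poch, Nat.descFactorial_eq_prod_range, Nat.cast_prod]
  rw [← Finset.card_range k, ← Finset.prod_const (-1 : ℂ), Finset.card_range,
    ← Finset.prod_mul_distrib]
  apply Finset.prod_congr rfl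
  intro j hj
  have hj' : j ≤ n := le_trans (le_of_lt (Finset.mem_range.mp hj)) hk
  rw [Nat.cast_sub hj']; ring

lemma calL_eq_sum (ρ : ℕ) (α : ℝ) (δ : Fin ρ → ℝ) (κ : Fin ρ → ℕ) (n : ℕ) (x : ℂ) :
    calL ρ α δ κ n x = ∑ k ∈ Finset.range (n+1),
      poch (-(n : ℂ)) k * (∏ i, poch ((δ i : ℂ) + 1) k) /
        (poch ((α : ℂ) + 1) k * ∏ i, poch ((κ i : ℂ) + (δ i : ℂ) + 1) k) *
        x ^ k / (Nat.factorial k) := by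
  apply tsum_eq_sum
  intro k hk
  have hnk : n < k := by
    by_contra h
    exact hk (Finset.mem_range.mpr (by omega))
  have h0 : poch (-(n:ℂ)) k = 0 :=
    Finset.prod_eq_zero (Finset.mem_range.mpr hnk) (by simp)
  simp [h0]

theorem stmt_4 (ρ : ℕ) (hρ : 0 < ρ) (δ : Fin ρ → ℝ) (hδ : ∀ i, -1 < δ i)
    (κ : Fin ρ → ℕ) (α : ℝ) (hα : -1 < α) (t x : ℂ) :
    HasSum (fun n : ℕ => calL ρ α δ κ n x * t ^ n / (Nat.factorial n))
      (Complex.exp t *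
        ∑' k : ℕ, (∏ i, poch ((δ i : ℂ) + 1) k) /
          (poch ((α : ℂ) + 1) k * ∏ i, poch ((κ i : ℂ) + (δ i : ℂ) + 1) k) *
          (-(x*t)) ^ k / (Nat.factorial k)) := by
  have hα1 : (0:ℝ) < α + 1 := by linarith
  set C : ℕ → ℂ := fun k => (∏ i, poch ((δ i : ℂ) + 1) k) /
      (poch ((α : ℂ) + 1) k * ∏ i, poch ((κ i : ℂ) + (δ i : ℂ) + 1) k) with hC
  set f : ℕ → ℂ := fun k => C k * (-(x*t)) ^ k / (Nat.factorial k) with hfd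
  set g : ℕ → ℂ := fun m => t ^ m / (Nat.factorial m) with hgd
  -- cast of C
  have hCcast : ∀ k, C k = (((∏ i, pochR (δ i + 1) k) /
      (pochR (α + 1) k * ∏ i, pochR ((κ i : ℝ) + δ i + 1) k) : ℝ) : ℂ) := by
    intro k
    simp only [hC]
    push_cast
    congr 1
    · exact Finset.prod_congr rfl fun i _ => by rw [poch, pochR]; push_cast; rfl
    · congr 1
      · rw [poch, pochR]; push_cast; rfl
      · exact Finset.prod_congr rfl fun i _ => by rw [poch, pochR]; push_cast; rfl
  -- norm bound on C
  have hCbound : ∀ k, ‖C k‖ ≤ ((α+1)⁻¹) ^ k := by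
    intro k
    rw [hCcast k, Complex.norm_real, Real.norm_eq_abs]
    have hQ1 : 0 < pochR (α + 1) k := pochR_pos hα1 k
    have hQ2 : 0 < ∏ i, pochR ((κ i : ℝ) + δ i + 1) k :=
      Finset.prod_pos fun i _ => pochR_pos
        (by have h1 := hδ i; have h2 : (0:ℝ) ≤ (κ i : ℝ) := Nat.cast_nonneg _; linarith) k
    have hPpos : 0 < ∏ i, pochR (δ i + 1) k :=
      Finset.prod_pos fun i _ => pochR_pos (by have := hδ i; linarith) k
    have hP : (∏ i, pochR (δ i + 1) k) ≤ ∏ i, pochR ((κ i : ℝ) + δ i + 1) k := by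
      apply Finset.prod_le_prod
      · intro i _; exact le_of_lt (pochR_pos (by have := hδ i; linarith) k)
      · intro i _
        exact pochR_mono (by have := hδ i; linarith)
          (by have : (0:ℝ) ≤ κ i := Nat.cast_nonneg _; linarith) k
    rw [abs_of_nonneg (le_of_lt (div_pos hPpos (mul_pos hQ1 hQ2)))]
    calc (∏ i, pochR (δ i + 1) k) / (pochR (α + 1) k * ∏ i, pochR ((κ i : ℝ) + δ i + 1) k)
        = ((∏ i, pochR (δ i + 1) k) / (∏ i, pochR ((κ i : ℝ) + δ i + 1) k)) * (1 / pochR (α + 1) k) := by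
          rw [div_mul_div_comm, mul_one, mul_comm]
      _ ≤ 1 * (1 / pochR (α + 1) k) := by
          apply mul_le_mul_of_nonneg_right _ (by positivity)
          exact div_le_one_of_le₀ hP (le_of_lt hQ2)
      _ = 1 / pochR (α + 1) k := one_mul _
      _ ≤ 1 / ((α+1) ^ k) :=
          one_div_le_one_div_of_le (by positivity) (pow_le_pochR hα1 k)
      _ = ((α+1)⁻¹) ^ k := by rw [one_div, inv_pow]
  -- summability
  have hfn : Summable fun k => ‖f k‖ := by
    have hle : ∀ k, ‖f k‖ ≤ ((‖x‖*‖t‖)/(α+1)) ^ k / (Nat.factorial k) := by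
      intro k
      simp only [hfd, norm_div, norm_mul, norm_pow, norm_neg, Complex.norm_natCast]
      calc ‖C k‖ * (‖x‖*‖t‖) ^ k / (Nat.factorial k : ℝ)
          ≤ ((α+1)⁻¹) ^ k * (‖x‖*‖t‖) ^ k / (Nat.factorial k : ℝ) := by
            gcongr
            exact hCbound k
        _ = ((‖x‖*‖t‖)/(α+1)) ^ k / (Nat.factorial k : ℝ) := by
            rw [div_pow, inv_pow]; ring
    exact Summable.of_nonneg_of_le (fun k => norm_nonneg _) hle
      (Real.summable_pow_div_factorial _)
  have hgn : Summable fun m => ‖g m‖ := by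
    have : ∀ m, ‖g m‖ = ‖t‖ ^ m / (Nat.factorial m : ℝ) := by
      intro m; simp [hgd, norm_div, norm_pow]
    simpa [this] using Real.summable_pow_div_factorial ‖t‖
  have key := hasSum_sum_range_mul_of_summable_norm hfn hgn
  have hexp : Complex.exp t = ∑' m, g m := by
    rw [Complex.exp_eq_exp_ℂ, NormedSpace.exp_eq_tsum_div]
  -- termwise identity
  have hterm : ∀ n : ℕ, calL ρ α δ κ n x * t ^ n / (Nat.factorial n)
      = ∑ k ∈ Finset.range (n+1), f k * g (n-k) := by
    intro n
    rw [calL_eq_sum, Finset.sum_mul, Finset.sum_div]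
    apply Finset.sum_congr rfl
    intro k hk
    have hk' : k ≤ n := by
      have := Finset.mem_range.mp hk; omega
    have hfac : ((n - k).factorial : ℂ) * (n.descFactorial k : ℂ) = (n.factorial : ℂ) := by
      exact_mod_cast congrArg (Nat.cast (R := ℂ)) (Nat.factorial_mul_descFactorial hk')
    have hdf : (n.descFactorial k : ℂ) = (n.factorial : ℂ) / ((n - k).factorial : ℂ) := by
      rw [eq_div_iff (by exact_mod_cast Nat.factorial_ne_zero _)]
      linear_combination hfac
    have hpow : t ^ n = t ^ k * t ^ (n - k) := by
      rw [← pow_add, Nat.add_sub_cancel' hk']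
    rw [mul_div_assoc (poch (-(n:ℂ)) k), poch_neg_nat hk', hdf]
    rw [show (∏ i, poch ((δ i : ℂ) + 1) k) /
        (poch ((α : ℂ) + 1) k * ∏ i, poch ((κ i : ℂ) + (δ i : ℂ) + 1) k) = C k from rfl]
    simp only [hfd, hgd]
    have hneg : (-(x*t)) ^ k = (-1) ^ k * x ^ k * t ^ k := by
      rw [← neg_one_mul, mul_pow, mul_pow]; ring
    rw [hneg, hpow]
    have h1 : ((n - k).factorial : ℂ) ≠ 0 := by exact_mod_cast Nat.factorial_ne_zero _
    have h2 : (n.factorial : ℂ) ≠ 0 := by exact_mod_cast Nat.factorial_ne_zero _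
    have h3 : ((k).factorial : ℂ) ≠ 0 := by exact_mod_cast Nat.factorial_ne_zero _
    field_simp
  have hfun : (fun n : ℕ => calL ρ α δ κ n x * t ^ n / (Nat.factorial n))
      = fun n => ∑ k ∈ Finset.range (n+1), f k * g (n-k) := funext hterm
  rw [hfun, hexp, mul_comm]
  exact key
end
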